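/- arXiv:2509.23753 — 3 statements merged into one kernel-verified Lean document; each statement's English description precedes it below -/
import Mathlib

section
/- Let X be a real random variable on a finite probability space taking values in (0,1] with E[X] > 0. If Var(X) > 0, then E[X·log X]/E[X] > E[log X]. That is, the DFT lower bound is strictly tighter than the SFT lower bound whenever X is non-constant. -/
theorem stmt_2 {ι : Type*} [Fintype ι] (p X : ι → ℝ)
    (hp : ∀ i, 0 < p i) (hsum : ∑ i, p i = 1)
    (hX : ∀ i, 0 < X i ∧ X i ≤ 1)
    (hEX : 0 < ∑ i, p i * X i)
    (hVar : 0 < (∑ i, p i * (X i)^2) - (∑ i, p i * X i)^2) :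
    (∑ i, p i * (X i * Real.log (X i))) / (∑ i, p i * X i) >
      ∑ i, p i * Real.log (X i) := by
  set L : ι → ℝ := fun i => Real.log (X i) with hL
  set E1 : ℝ := ∑ i, p i * X i with hE1
  set EL : ℝ := ∑ i, p i * L i with hEL
  set EXL : ℝ := ∑ i, p i * (X i * L i) with hEXL
  -- there exist i j with X i ≠ X j
  obtain ⟨i0, j0, hne⟩ : ∃ i j, X i ≠ X j := by
    by_contra h
    push_neg at h
    -- X is constant; Var = 0
    have hι : Nonempty ι := by
      by_contra hempty
      have := not_nonempty_iff.mp hempty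
      rw [hE1, Finset.univ_eq_empty, Finset.sum_empty] at hEX
      exact lt_irrefl 0 hEX
    obtain ⟨k⟩ := hι
    have h1 : ∑ i, p i * X i = X k := by
      rw [show (X k) = (∑ i, p i) * X k by rw [hsum]; ring, Finset.sum_mul]
      exact Finset.sum_congr rfl fun i _ => by rw [h i k]
    have h2 : ∑ i, p i * (X i)^2 = (X k)^2 := by
      rw [show (X k)^2 = (∑ i, p i) * (X k)^2 by rw [hsum]; ring, Finset.sum_mul]
      exact Finset.sum_congr rfl fun i _ => by rw [h i k]
    rw [h2, hE1, h1] at hVar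
    simp at hVar
  -- key identity
  have inner : ∀ i, ∑ j, p i * p j * ((X i - X j) * (L i - L j)) =
      p i * (X i * L i) - p i * X i * EL - p i * L i * E1 + p i * EXL := by
    intro i
    have e : ∀ j, p i * p j * ((X i - X j) * (L i - L j)) =
        (X i * L i) * (p i * p j) - (p i * X i) * (p j * L j)
          - (p i * L i) * (p j * X j) + p i * (p j * (X j * L j)) := fun j => by ring
    simp_rw [e, Finset.sum_add_distrib, Finset.sum_sub_distrib, ← Finset.mul_sum, hsum]
    ring
  have key : ∑ i, ∑ j, p i * p j * ((X i - X j) * (L i - L j)) = 2 * (EXL - E1 * EL) := by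
    simp_rw [inner, Finset.sum_add_distrib, Finset.sum_sub_distrib, ← Finset.sum_mul,
      ← hEXL, ← hE1, ← hEL, hsum]
    ring
  -- positivity of the double sum
  have hterm : ∀ i j, 0 ≤ p i * p j * ((X i - X j) * (L i - L j)) := by
    intro i j
    apply mul_nonneg (mul_nonneg (hp i).le (hp j).le)
    rcases lt_trichotomy (X i) (X j) with h | h | h
    · have h2 : L i - L j ≤ 0 := by
        simpa [hL] using sub_nonpos.2 (Real.log_le_log (hX i).1 h.le)
      nlinarith
    · simp [h]
    · exact mul_nonneg (by linarith)
        (by simpa [hL] using sub_nonneg.2 (Real.log_le_log (hX j).1 h.le))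
  have hpos : 0 < ∑ i, ∑ j, p i * p j * ((X i - X j) * (L i - L j)) := by
    apply Finset.sum_pos' (fun i _ => Finset.sum_nonneg fun j _ => hterm i j)
    refine ⟨i0, Finset.mem_univ _, Finset.sum_pos' (fun j _ => hterm i0 j)
      ⟨j0, Finset.mem_univ _, ?_⟩⟩
    apply mul_pos (mul_pos (hp i0) (hp j0))
    rcases lt_or_gt_of_ne hne with h | h
    · exact mul_pos_of_neg_of_neg (by linarith)
        (by simpa [hL] using sub_neg.2 (Real.log_lt_log (hX i0).1 h))
    · exact mul_pos (by linarith)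
        (by simpa [hL] using sub_pos.2 (Real.log_lt_log (hX j0).1 h))
  rw [key] at hpos
  rw [gt_iff_lt, lt_div_iff₀ hEX]
  nlinarith
end

section
/- Let X be a random variable on a finite probability space with all probabilities positive, taking values in (0,1]. Then Cov(X, log X) = 0 if and only if X is almost surely constant. -/
theorem stmt_3 {ι : Type*} [Fintype ι] (p X : ι → ℝ)
    (hp : ∀ i, 0 < p i) (hsum : ∑ i, p i = 1)
    (hX : ∀ i, 0 < X i ∧ X i ≤ 1) :
    ((∑ i, p i * (X i * Real.log (X i))) -
      (∑ i, p i * X i) * (∑ i, p i * Real.log (X i)) = 0) ↔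
      ∀ i j, X i = X j := by
  set L : ι → ℝ := fun i => Real.log (X i) with hL
  have key : ∑ i, ∑ j, p i * p j * ((X i - X j) * (L i - L j))
      = 2 * ((∑ i, p i * (X i * L i)) - (∑ i, p i * X i) * (∑ i, p i * L i)) := by
    have e1 : ∀ i j : ι, p i * p j * ((X i - X j) * (L i - L j))
        = (p i * (X i * L i)) * p j + p i * (p j * (X j * L j))
          - (p i * X i) * (p j * L j) - (p i * L i) * (p j * X j) := by
      intros; ring
    simp only [e1, Finset.sum_sub_distrib, Finset.sum_add_distrib,
      ← Finset.sum_mul, ← Finset.mul_sum]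
    rw [hsum]; ring
  have hnn : ∀ i j : ι, 0 ≤ p i * p j * ((X i - X j) * (L i - L j)) := by
    intro i j
    apply mul_nonneg (mul_nonneg (hp i).le (hp j).le)
    rcases le_total (X i) (X j) with h | h
    · have : L i ≤ L j := Real.log_le_log (hX i).1 h
      nlinarith
    · have : L j ≤ L i := Real.log_le_log (hX j).1 h
      exact mul_nonneg (by linarith) (by linarith)
  constructor
  · intro h0 i j
    have hdz : ∑ i, ∑ j, p i * p j * ((X i - X j) * (L i - L j)) = 0 := by
      rw [key, h0]; ring
    have h1 := (Finset.sum_eq_zero_iff_of_nonneg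
      (fun i _ => Finset.sum_nonneg (fun j _ => hnn i j))).mp hdz i (Finset.mem_univ i)
    have h2 := (Finset.sum_eq_zero_iff_of_nonneg
      (fun j _ => hnn i j)).mp h1 j (Finset.mem_univ j)
    have hpij : 0 < p i * p j := mul_pos (hp i) (hp j)
    have h3 : (X i - X j) * (L i - L j) = 0 := by
      rcases mul_eq_zero.mp h2 with h | h
      · exact absurd h hpij.ne'
      · exact h
    by_contra hne
    rcases lt_or_gt_of_ne hne with h | h
    · have hl : L i < L j := Real.log_lt_log (hX i).1 h
      nlinarith
    · have hl : L j < L i := Real.log_lt_log (hX j).1 h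
      nlinarith
  · intro hc
    have hdz : ∑ i, ∑ j, p i * p j * ((X i - X j) * (L i - L j)) = 0 := by
      apply Finset.sum_eq_zero; intro i _
      apply Finset.sum_eq_zero; intro j _
      rw [hc i j]; ring
    rw [hdz] at key
    linarith
end

section
/- Let p : ι → (0,1] be weights on a nonempty finite set D⁺ with uniform distribution. Define the DFT auxiliary distribution q(τ) = p(τ) / Σ_{σ∈D⁺} p(σ). Then the DFT weighted objective Σ_{τ∈D⁺} q(τ) log p(τ) equals (Σ_τ p(τ) log p(τ)) / (Σ_τ p(τ)), and this quantity is ≥ (1/|D⁺|) Σ_τ log p(τ) (the unweighted SFT average), with equality iff p is constant on D⁺. -/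
theorem stmt_8 {ι : Type*} (D : Finset ι) (hD : D.Nonempty) (p : ι → ℝ)
    (hp : ∀ t ∈ D, 0 < p t ∧ p t ≤ 1) :
    (∑ t ∈ D, (p t / ∑ s ∈ D, p s) * Real.log (p t) =
      (∑ t ∈ D, p t * Real.log (p t)) / (∑ t ∈ D, p t)) ∧
    ((∑ t ∈ D, p t * Real.log (p t)) / (∑ t ∈ D, p t) ≥
      (1 / (D.card : ℝ)) * ∑ t ∈ D, Real.log (p t)) ∧
    ((∑ t ∈ D, p t * Real.log (p t)) / (∑ t ∈ D, p t) =
      (1 / (D.card : ℝ)) * ∑ t ∈ D, Real.log (p t) ↔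
      ∀ t ∈ D, ∀ s ∈ D, p t = p s) := by
  set L : ι → ℝ := fun t => Real.log (p t) with hL
  set A : ℝ := ∑ t ∈ D, p t * L t with hA
  set B : ℝ := ∑ t ∈ D, p t with hB
  set C : ℝ := ∑ t ∈ D, L t with hC
  have hBpos : 0 < B := Finset.sum_pos (fun t ht => (hp t ht).1) hD
  have hnpos : 0 < (D.card : ℝ) := by
    exact_mod_cast Finset.card_pos.mpr hD
  -- key identity
  have hid : ∑ t ∈ D, ∑ s ∈ D, (p t - p s) * (L t - L s)
      = 2 * ((D.card : ℝ) * A - B * C) := by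
    have : ∀ t ∈ D, ∑ s ∈ D, (p t - p s) * (L t - L s)
        = (D.card : ℝ) * (p t * L t) - p t * C - L t * B + A := by
      intro t _
      have : ∀ s ∈ D, (p t - p s) * (L t - L s)
          = p t * L t - p t * L s - L t * p s + p s * L s := by intros; ring
      rw [Finset.sum_congr rfl this]
      simp [Finset.sum_add_distrib, Finset.sum_sub_distrib, ← Finset.mul_sum,
        Finset.sum_const, hA, hB, hC, nsmul_eq_mul]
    rw [Finset.sum_congr rfl this]
    simp only [Finset.sum_add_distrib, Finset.sum_sub_distrib, ← Finset.mul_sum,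
      ← Finset.sum_mul, Finset.sum_const, nsmul_eq_mul, hA, hB, hC]
    ring
  have hterm : ∀ t ∈ D, ∀ s ∈ D, 0 ≤ (p t - p s) * (L t - L s) := by
    intro t ht s hs
    rcases le_total (p t) (p s) with h | h
    · have : L t ≤ L s := Real.log_le_log (hp t ht).1 h
      nlinarith
    · have : L s ≤ L t := Real.log_le_log (hp s hs).1 h
      nlinarith
  have hSnonneg : 0 ≤ ∑ t ∈ D, ∑ s ∈ D, (p t - p s) * (L t - L s) :=
    Finset.sum_nonneg fun t ht => Finset.sum_nonneg fun s hs => hterm t ht s hs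
  refine ⟨?_, ?_, ?_⟩
  · rw [Finset.sum_div]
    exact Finset.sum_congr rfl fun t _ => by rw [div_mul_eq_mul_div]
  · rw [ge_iff_le, one_div, inv_mul_eq_div, div_le_div_iff₀ hnpos hBpos]
    nlinarith [hid]
  · rw [one_div, inv_mul_eq_div, div_eq_div_iff hBpos.ne' hnpos.ne']
    constructor
    · intro h
      have hS0 : ∑ t ∈ D, ∑ s ∈ D, (p t - p s) * (L t - L s) = 0 := by
        rw [hid]; nlinarith
      have h1 := (Finset.sum_eq_zero_iff_of_nonneg
        (fun t ht => Finset.sum_nonneg fun s hs => hterm t ht s hs)).mp hS0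
      intro t ht s hs
      have h2 := (Finset.sum_eq_zero_iff_of_nonneg
        (fun s hs => hterm t ht s hs)).mp (h1 t ht) s hs
      rcases mul_eq_zero.mp h2 with h3 | h3
      · linarith
      · have : L t = L s := by linarith
        exact Real.log_injOn_pos (Set.mem_Ioi.mpr (hp t ht).1)
          (Set.mem_Ioi.mpr (hp s hs).1) this
    · intro h
      -- p constant: then A * n = C * B
      obtain ⟨t0, ht0⟩ := hD
      have hpc : ∀ t ∈ D, p t = p t0 := fun t ht => h t ht t0 ht0
      have hLc : ∀ t ∈ D, L t = L t0 := by
        intro t ht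
        show Real.log (p t) = Real.log (p t0)
        rw [hpc t ht]
      have hAeq : A = p t0 * L t0 * D.card := by
        rw [hA, Finset.sum_congr rfl (fun t ht => by rw [hpc t ht, hLc t ht])]
        simp [mul_comm]
      have hBeq : B = p t0 * D.card := by
        rw [hB, Finset.sum_congr rfl hpc]; simp [mul_comm]
      have hCeq : C = L t0 * D.card := by
        rw [hC, Finset.sum_congr rfl hLc]; simp [mul_comm]
      rw [hAeq, hBeq, hCeq]; ring
end
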